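/- arXiv:1202.4640 — 6 statements merged into one kernel-verified Lean document; each statement's English description precedes it below -/
import Mathlib

section
/- Let H and B be self-adjoint operators on a Hilbert space H with B bounded, and suppose the commutation relation e^{-itB} H e^{itB} = e(t)·H holds on dom(H) for all t ∈ ℝ, where e : ℝ → (0,∞) is a differentiable multiplicative homomorphism (e(s+t) = e(s)e(t), e(0) = 1). Then for every z ∈ ℂ \ ℝ, the strong derivative at t = 0 of t ↦ e^{-itB}(H − z)^{-1} e^{itB} exists and equals −e'(0)·(H − z)^{-1} H (H − z)^{-1}. -/
/-!
Conjugating `H - z` by `W t = e^{itB}` gives `e(t)H - z`, so `W(-t) R W(t) · A(t) = R` with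
`A(t) = 1 + (e(t) - 1) H R` and `H R = 1 + z R`. Since `A(0) = 1`, the operator `A(t)` is
invertible near `t = 0`, where `W(-t) R W(t) = R A(t)⁻¹`; differentiating the inverse in the
Banach algebra gives the derivative `-e'(0) R H R`.
-/

open Complex Filter Topology

theorem NormedSpace.exp_neg_mul_exp_self {𝔸 : Type*} [NormedRing 𝔸] [NormedAlgebra ℂ 𝔸]
    [CompleteSpace 𝔸] (x : 𝔸) : exp (-x) * exp x = 1 := by
  have hmem (y : 𝔸) : y ∈ Metric.eball (0 : 𝔸) (expSeries ℂ 𝔸).radius :=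
    (expSeries_radius_eq_top ℂ 𝔸).symm ▸ edist_lt_top _ _
  rw [← exp_add_of_commute_of_mem_ball (Commute.refl x).neg_left (hmem _) (hmem _),
    neg_add_cancel, exp_zero]

theorem conj_resolvent_mul_eq {E : Type*} [NormedAddCommGroup E] [NormedSpace ℂ E]
    {T : E →ₗ.[ℂ] E} {U V R : E →L[ℂ] E} {c : ℝ} {z : ℂ}
    (hVU : V * U = 1) (hUV : U * V = 1)
    (hT : ∀ φ (hφ : φ ∈ T.domain), ∃ hm : U φ ∈ T.domain, V (T ⟨U φ, hm⟩) = c • T ⟨φ, hφ⟩)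
    (hR1 : ∀ φ, ∃ hm : R φ ∈ T.domain, T ⟨R φ, hm⟩ - z • R φ = φ)
    (hR2 : ∀ φ (hφ : φ ∈ T.domain), R (T ⟨φ, hφ⟩ - z • φ) = φ) :
    V * R * U * (1 + ((c : ℂ) - 1) • (1 + z • R)) = R := by
  ext χ
  obtain ⟨hRχ, hTRχ⟩ := hR1 χ
  obtain ⟨hURχ, hTURχ⟩ := hT (R χ) hRχ
  have hT_conj : T ⟨U (R χ), hURχ⟩ = c • U (T ⟨R χ, hRχ⟩) := by
    rw [← U.map_smul_of_tower, ← hTURχ, ← mul_apply_eq_comp U V, hUV, one_apply_eq_self]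
  have hT_resolvent : T ⟨R χ, hRχ⟩ = χ + z • R χ := eq_add_of_sub_eq hTRχ
  have hshift : T ⟨U (R χ), hURχ⟩ - z • U (R χ) =
      U ((1 + ((c : ℂ) - 1) • (1 + z • R)) χ) := by
    rw [hT_conj, hT_resolvent]
    simp only [add_apply, one_apply_eq_self, smul_apply, map_add, map_smul, ← Complex.coe_smul]
    module
  have hR_U : R (U ((1 + ((c : ℂ) - 1) • (1 + z • R)) χ)) = U (R χ) := hshift ▸ hR2 _ hURχ
  rw [mul_apply_eq_comp, mul_apply_eq_comp, mul_apply_eq_comp, hR_U, ← mul_apply_eq_comp V U, hVU,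
    one_apply_eq_self]

theorem HasDerivAt.ringInverse_of_eq_one {𝕜 𝔸 : Type*} [NontriviallyNormedField 𝕜]
    [NormedRing 𝔸] [NormedAlgebra 𝕜 𝔸] [CompleteSpace 𝔸] {A : 𝕜 → 𝔸} {A' : 𝔸} {x : 𝕜}
    (hA : HasDerivAt A A' x) (hA1 : A x = 1) :
    HasDerivAt (fun t => Ring.inverse (A t)) (-A') x := by
  have hinv := hasFDerivAt_ringInverse (𝕜 := 𝕜) (1 : 𝔸ˣ)
  rw [Units.val_one, ← hA1] at hinv
  simpa [Function.comp_def] using hinv.comp_hasDerivAt x hA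

theorem HasDerivAt.clm_apply_const {F : Type*} [NormedAddCommGroup F] [NormedSpace ℂ F]
    {G : Type*} [NormedAddCommGroup G] [NormedSpace ℂ G]
    {L : ℝ → F →L[ℂ] G} {L' : F →L[ℂ] G} {x : ℝ} (hL : HasDerivAt L L' x) (φ : F) :
    HasDerivAt (fun t => L t φ) (L' φ) x :=
  ((ContinuousLinearMap.apply ℂ G φ).restrictScalars ℝ).hasFDerivAt.comp_hasDerivAt x hL

theorem deriv_conj_resolvent_general
    {H : Type*} [NormedAddCommGroup H] [InnerProductSpace ℂ H] [CompleteSpace H]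
    (Hop : H →ₗ.[ℂ] H)
    (B : H →L[ℂ] H)
    -- the unitary group generated by `B`
    (W : ℝ → H →L[ℂ] H) (hW : ∀ t : ℝ, W t = NormedSpace.exp ((Complex.I * t) • B))
    -- `e` is a differentiable homomorphism `(ℝ,+) → ((0,∞),·)` with `e'(0) = e'`
    (e : ℝ → ℝ)
    (he_zero : e 0 = 1) (e' : ℝ) (he' : HasDerivAt e e' 0)
    -- the homogeneity relation `e^{-itB} H e^{itB} = e(t) H` on `dom H`
    (hhom : ∀ t : ℝ, ∀ φ : H, ∀ hφ : φ ∈ Hop.domain,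
      ∃ hm : W t φ ∈ Hop.domain,
        W (-t) (Hop ⟨W t φ, hm⟩) = e t • Hop ⟨φ, hφ⟩)
    -- `R` is the resolvent `(H - z)⁻¹` for `z ∈ ℂ \ ℝ`
    (z : ℂ) (R : H →L[ℂ] H)
    (hR1 : ∀ φ : H, ∃ hm : R φ ∈ Hop.domain, Hop ⟨R φ, hm⟩ - z • R φ = φ)
    (hR2 : ∀ φ : H, ∀ hφ : φ ∈ Hop.domain, R (Hop ⟨φ, hφ⟩ - z • φ) = φ) :
    ∀ φ : H, HasDerivAt (fun t : ℝ => W (-t) (R (W t φ)))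
      ((-e') • R (φ + z • R φ)) 0 := by
  intro φ
  have hW_neg_mul (t : ℝ) : W (-t) * W t = 1 := by
    rw [hW, hW, ofReal_neg, mul_neg, neg_smul, NormedSpace.exp_neg_mul_exp_self]
  set C : H →L[ℂ] H := 1 + z • R
  set A : ℝ → H →L[ℂ] H := fun t => 1 + ((e t : ℂ) - 1) • C
  have hconj (t : ℝ) : W (-t) * R * W t * A t = R :=
    conj_resolvent_mul_eq (hW_neg_mul t) (by simpa using hW_neg_mul (-t)) (hhom t) hR1 hR2
  have hA : HasDerivAt A ((e' : ℂ) • C) 0 :=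
    ((he'.ofReal_comp.sub_const 1).smul_const C).const_add 1
  have hA0 : A 0 = 1 := by simp [A, he_zero]
  have hA_unit : ∀ᶠ t in 𝓝 0, IsUnit (A t) :=
    hA.continuousAt.eventually_mem (Units.isOpen.mem_nhds (hA0 ▸ isUnit_one))
  have hconj_eq : (fun t => W (-t) * R * W t) =ᶠ[𝓝 0] fun t => R * Ring.inverse (A t) :=
    hA_unit.mono fun t ht => (Ring.eq_mul_inverse_iff_mul_eq _ _ _ ht).2 (hconj t)
  have hderiv := (((hA.ringInverse_of_eq_one hA0).const_mul R).congr_of_eventuallyEq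
    hconj_eq).clm_apply_const φ
  have hvalue : (R * -((e' : ℂ) • C)) φ = (-e') • R (φ + z • R φ) := by
    rw [mul_neg, neg_apply, mul_apply_eq_comp, smul_apply, map_smul, add_apply, one_apply_eq_self,
      smul_apply, neg_smul, Complex.coe_smul]
  exact hvalue ▸ hderiv

/-- If `e^{-itB} H e^{itB} = e(t)·H` on `dom H` for a self-adjoint `H`, a bounded
self-adjoint `B` and a differentiable multiplicative homomorphism `e : ℝ → (0,∞)`, then
for `z ∈ ℂ \ ℝ` the map `t ↦ e^{-itB}(H-z)⁻¹e^{itB}` is strongly differentiable at `t = 0`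
with derivative `-e'(0)·(H-z)⁻¹H(H-z)⁻¹`  (note `H(H-z)⁻¹ = 1 + z(H-z)⁻¹`). -/
theorem deriv_conj_resolvent
    {H : Type*} [NormedAddCommGroup H] [InnerProductSpace ℂ H] [CompleteSpace H]
    (Hop : H →ₗ.[ℂ] H) (hHop : IsSelfAdjoint Hop)
    (B : H →L[ℂ] H) (hB : IsSelfAdjoint B)
    -- the unitary group generated by `B`
    (W : ℝ → H →L[ℂ] H) (hW : ∀ t : ℝ, W t = NormedSpace.exp ((Complex.I * t) • B))
    -- `e` is a differentiable homomorphism `(ℝ,+) → ((0,∞),·)` with `e'(0) = e'`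
    (e : ℝ → ℝ) (he_pos : ∀ t, 0 < e t) (he_hom : ∀ s t, e (s + t) = e s * e t)
    (he_zero : e 0 = 1) (e' : ℝ) (he' : HasDerivAt e e' 0)
    -- the homogeneity relation `e^{-itB} H e^{itB} = e(t) H` on `dom H`
    (hhom : ∀ t : ℝ, ∀ φ : H, ∀ hφ : φ ∈ Hop.domain,
      ∃ hm : W t φ ∈ Hop.domain,
        W (-t) (Hop ⟨W t φ, hm⟩) = e t • Hop ⟨φ, hφ⟩)
    -- `R` is the resolvent `(H - z)⁻¹` for `z ∈ ℂ \ ℝ`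
    (z : ℂ) (hz : z.im ≠ 0) (R : H →L[ℂ] H)
    (hR1 : ∀ φ : H, ∃ hm : R φ ∈ Hop.domain, Hop ⟨R φ, hm⟩ - z • R φ = φ)
    (hR2 : ∀ φ : H, ∀ hφ : φ ∈ Hop.domain, R (Hop ⟨φ, hφ⟩ - z • φ) = φ) :
    ∀ φ : H, HasDerivAt (fun t : ℝ => W (-t) (R (W t φ)))
      ((-e') • R (φ + z • R φ)) 0 :=
  deriv_conj_resolvent_general Hop B W hW e he_zero e' he' hhom z R hR1 hR2
end

section
/- Let H be a self-adjoint operator on a Hilbert space H. If the Hilbert space decomposes as H = ker(H²) ⊕ H_ac(H²), where H_ac(H²) is the absolutely continuous subspace of H², then H = ker(H) ⊕ H_ac(H), where H_ac(H) is the absolutely continuous subspace of H. That is, if H² has purely absolutely continuous spectrum away from 0, then so does H. -/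
/-!
A vector killed by `H²` is killed by `H`, because `‖Hψ‖² = ⟨ψ, H²ψ⟩`. A vector whose
`H²`-spectral measure is absolutely continuous has absolutely continuous `H`-spectral measure,
because that measure pushes forward to the former under `λ ↦ λ²`, and a differentiable map
sends Lebesgue-null sets to Lebesgue-null sets.
-/

open MeasureTheory

namespace LinearPMap

variable {𝕜 E : Type*} [RCLike 𝕜] [NormedAddCommGroup E] [InnerProductSpace 𝕜 E]

theorem _root_.IsSelfAdjoint.isFormalAdjoint [CompleteSpace E] {A : E →ₗ.[𝕜] E}
    (hA : IsSelfAdjoint A) : A.IsFormalAdjoint A := by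
  simpa only [isSelfAdjoint_def.mp hA] using adjoint_isFormalAdjoint hA.dense_domain

theorem IsFormalAdjoint.apply_eq_zero_of_apply_apply_eq_zero {T : E →ₗ.[𝕜] E}
    (hT : T.IsFormalAdjoint T) (x : T.domain) (hx : T x ∈ T.domain) (h : T ⟨T x, hx⟩ = 0) :
    T x = 0 := by
  have hnorm : inner 𝕜 (T x) (T x) = 0 := by simpa only [h, inner_zero_right] using hT x ⟨T x, hx⟩
  exact inner_self_eq_zero.mp hnorm

end LinearPMap

namespace MeasureTheory.Measure.AbsolutelyContinuous

theorem of_map {α β : Type*} [MeasurableSpace α] [MeasurableSpace β] {μ ρ : Measure α}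
    {ν : Measure β} {f : α → β} (hf : Measurable f) (hN : ∀ s, ρ s = 0 → ν (f '' s) = 0)
    (h : μ.map f ≪ ν) : μ ≪ ρ := by
  intro s hs
  have hnull : μ.map f (toMeasurable ν (f '' s)) = 0 :=
    h (by rw [measure_toMeasurable]; exact hN s hs)
  rw [Measure.map_apply hf (measurableSet_toMeasurable _ _)] at hnull
  exact measure_mono_null
    ((Set.subset_preimage_image f s).trans (Set.preimage_mono (subset_toMeasurable _ _))) hnull

theorem of_map_of_differentiable {E : Type*} [NormedAddCommGroup E] [NormedSpace ℝ E]
    [FiniteDimensional ℝ E] [MeasurableSpace E] [BorelSpace E] {μ : Measure E} (ν : Measure E)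
    [ν.IsAddHaarMeasure] {f : E → E} (hf : Differentiable ℝ f) (h : μ.map f ≪ ν) : μ ≪ ν :=
  of_map hf.continuous.measurable
    (fun _ hs => addHaar_image_eq_zero_of_differentiableOn_of_addHaar_eq_zero ν
      hf.differentiableOn hs) h

end MeasureTheory.Measure.AbsolutelyContinuous

/-- If the Hilbert space decomposes as `ker(H²) ⊕ H_ac(H²)` then it decomposes as
`ker(H) ⊕ H_ac(H)`: i.e. if `H²` has purely absolutely continuous spectrum away from `0`,
then so does `H`. Here the spectral measures `μ₁ φ = ⟨φ, E^H(·)φ⟩` and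
`μ₂ φ = ⟨φ, E^{H²}(·)φ⟩` are related by `μ₂ φ = (μ₁ φ) ∘ (λ ↦ λ²)⁻¹`, and
`H_ac` is the set of vectors with spectral measure absolutely continuous w.r.t.
Lebesgue measure. -/
theorem decomposition_ker_ac
    {H : Type*} [NormedAddCommGroup H] [InnerProductSpace ℂ H] [CompleteSpace H]
    (Hop : H →ₗ.[ℂ] H) (hHop : IsSelfAdjoint Hop)
    (μ₁ μ₂ : H → Measure ℝ)
    (hrel : ∀ φ : H, μ₂ φ = (μ₁ φ).map (fun lam : ℝ => lam ^ 2))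
    -- `H = ker(H²) ⊕ H_ac(H²)`:
    (hdec : ∀ φ : H, ∃ ψ χ : H, φ = ψ + χ ∧
      (∃ (h1 : ψ ∈ Hop.domain) (h2 : Hop ⟨ψ, h1⟩ ∈ Hop.domain),
        Hop ⟨Hop ⟨ψ, h1⟩, h2⟩ = 0) ∧
      μ₂ χ ≪ volume) :
    -- `H = ker(H) ⊕ H_ac(H)`:
    ∀ φ : H, ∃ ψ χ : H, φ = ψ + χ ∧
      (∃ h1 : ψ ∈ Hop.domain, Hop ⟨ψ, h1⟩ = 0) ∧
      μ₁ χ ≪ volume := by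
  intro φ
  obtain ⟨ψ, χ, hφ, ⟨h1, h2, hker⟩, hac⟩ := hdec φ
  refine ⟨ψ, χ, hφ, ⟨h1, ?_⟩, ?_⟩
  · exact hHop.isFormalAdjoint.apply_eq_zero_of_apply_apply_eq_zero ⟨ψ, h1⟩ h2 hker
  · rw [hrel χ] at hac
    exact .of_map_of_differentiable volume (differentiable_pow 2) hac
end

section
/- Let A be a self-adjoint operator on a Hilbert space H. For any vector φ, if the spectral measure of φ with respect to A² is absolutely continuous with respect to Lebesgue measure, then the spectral measure of φ with respect to A is also absolutely continuous. Hence H_ac(A²) ⊆ H_ac(A). -/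
open MeasureTheory

theorem MeasureTheory.Measure.AbsolutelyContinuous.of_map_of_image_null
    {α β : Type*} [MeasurableSpace α] [MeasurableSpace β] {μ ν : Measure α} {ν' : Measure β}
    {f : α → β} (hf : AEMeasurable f μ) (hN : ∀ s, ν s = 0 → ν' (f '' s) = 0)
    (h : μ.map f ≪ ν') : μ ≪ ν := by
  intro s hs
  refine measure_mono_null (Set.subset_preimage_image f s) (nonpos_iff_eq_zero.mp ?_)
  calc μ (f ⁻¹' (f '' s)) ≤ μ.map f (f '' s) := Measure.le_map_apply hf _
    _ = 0 := h (hN s hs)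

theorem volume_image_sq_eq_zero {s : Set ℝ} (hs : volume s = 0) :
    volume ((fun x : ℝ => x ^ 2) '' s) = 0 :=
  addHaar_image_eq_zero_of_differentiableOn_of_addHaar_eq_zero volume
    (differentiable_pow 2).differentiableOn hs

theorem ac_sq_subset_ac_general
    {H : Type*}
    (μA μA2 : H → Measure ℝ)
    (hrel : ∀ φ : H, μA2 φ = (μA φ).map (fun lam : ℝ => lam ^ 2)) :
    (∀ φ : H, μA2 φ ≪ volume → μA φ ≪ volume) ∧
    {φ : H | μA2 φ ≪ volume} ⊆ {φ : H | μA φ ≪ volume} := by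
  have hac : ∀ φ : H, μA2 φ ≪ volume → μA φ ≪ volume := fun φ h =>
    .of_map_of_image_null (by fun_prop) (fun _ => volume_image_sq_eq_zero) (hrel φ ▸ h)
  exact ⟨hac, hac⟩

/-- If the spectral measure of `φ` with respect to `A²` is absolutely continuous with
respect to Lebesgue measure, then so is the spectral measure of `φ` with respect to `A`;
hence `H_ac(A²) ⊆ H_ac(A)`. The spectral measures are related by
`μ_{A²,φ} = μ_{A,φ} ∘ (λ ↦ λ²)⁻¹` (since `E^{A²}(J) = E^A({λ : λ² ∈ J})`). -/
theorem ac_sq_subset_ac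
    {H : Type*} [NormedAddCommGroup H] [InnerProductSpace ℂ H] [CompleteSpace H]
    (A : H →ₗ.[ℂ] H) (hA : IsSelfAdjoint A)
    (μA μA2 : H → Measure ℝ)
    (hrel : ∀ φ : H, μA2 φ = (μA φ).map (fun lam : ℝ => lam ^ 2)) :
    (∀ φ : H, μA2 φ ≪ volume → μA φ ≪ volume) ∧
    {φ : H | μA2 φ ≪ volume} ⊆ {φ : H | μA φ ≪ volume} :=
  ac_sq_subset_ac_general μA μA2 hrel
end

section
/- Let H₀ be self-adjoint on a Hilbert space and f a bounded positive invertible operator (δ ≤ f ≤ C). Define H := f^{1/2} H₀ f^{1/2} on the domain {φ : f^{1/2}φ ∈ dom(H₀)}. Then H is self-adjoint, and for every z ∈ ℂ \ ℝ the resolvent identity (H + z)^{-1} = f^{-1/2} (H₀ + z f^{-1})^{-1} f^{-1/2} holds. -/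
/-!
Since `f^{1/2}` is a bounded bijection with inverse `f^{-1/2}` and `f⁻¹ = (f^{-1/2})²`, on the
domain of `H` one has `H + z = f^{1/2} (H₀ + z f⁻¹) f^{1/2}`; this gives the resolvent identity
and shows that `H + z` is onto. The adjoint of `(H₀ + z f⁻¹)⁻¹` inverts `H₀ + z̄ f⁻¹`, so `H + z̄`
is onto as well, and a symmetric operator `H` for which both `H + z` and `H + z̄` are onto is
self-adjoint.
-/

open scoped InnerProductSpace ComplexConjugate LinearPMap

variable {H : Type*} [NormedAddCommGroup H] [InnerProductSpace ℂ H] [CompleteSpace H]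

/-- The sandwiched operator `f^{1/2} H₀ f^{1/2}` with domain `{φ : f^{1/2}φ ∈ dom H₀}`. -/
noncomputable def sandwich (H₀ : H →ₗ.[ℂ] H) (sq : H →L[ℂ] H) : H →ₗ.[ℂ] H where
  domain := H₀.domain.comap (sq : H →ₗ[ℂ] H)
  toFun :=
    { toFun := fun φ => sq (H₀ ⟨sq (φ : H), φ.2⟩)
      map_add' := by
        intro x y
        have h : (⟨sq ((x + y : _) : H), (x + y).2⟩ : H₀.domain)
            = ⟨sq (x : H), x.2⟩ + ⟨sq (y : H), y.2⟩ := by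
          apply Subtype.ext; simp
        show sq (H₀ ⟨sq ((x + y : _) : H), (x + y).2⟩) = _
        rw [h, H₀.map_add, map_add]
      map_smul' := by
        intro c x
        have h : (⟨sq ((c • x : _) : H), (c • x).2⟩ : H₀.domain)
            = c • ⟨sq (x : H), x.2⟩ := by
          apply Subtype.ext; simp
        show sq (H₀ ⟨sq ((c • x : _) : H), (c • x).2⟩) = _
        rw [h, H₀.map_smul, map_smul]; rfl }

namespace LinearPMap

variable {𝕜 E : Type*} [RCLike 𝕜] [NormedAddCommGroup E] [InnerProductSpace 𝕜 E]

theorem IsFormalAdjoint.inner_apply_add_conj_smul {S : E →ₗ.[𝕜] E} (hS : S.IsFormalAdjoint S)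
    (z : 𝕜) (x y : S.domain) :
    ⟪S x + conj z • (x : E), y⟫_𝕜 = ⟪(x : E), S y + z • (y : E)⟫_𝕜 := by
  rw [inner_add_left, inner_smul_left, RCLike.conj_conj, hS, inner_add_right, inner_smul_right]

theorem eq_zero_of_inner_apply_add_smul {S : E →ₗ.[𝕜] E} {z : 𝕜}
    (hz : ∀ ψ : E, ∃ x : S.domain, S x + z • (x : E) = ψ) {v : E}
    (hv : ∀ x : S.domain, ⟪v, S x + z • (x : E)⟫_𝕜 = 0) : v = 0 := by
  obtain ⟨x, rfl⟩ := hz v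
  exact inner_self_eq_zero.mp (hv x)

variable [CompleteSpace E]

theorem isSelfAdjoint_of_surjective_add_smul {S : E →ₗ.[𝕜] E} (hS : S.IsFormalAdjoint S) (z : 𝕜)
    (hz : ∀ ψ : E, ∃ x : S.domain, S x + z • (x : E) = ψ)
    (hz' : ∀ ψ : E, ∃ x : S.domain, S x + conj z • (x : E) = ψ) : IsSelfAdjoint S := by
  -- A vector `(S + z̄) η` orthogonal to `dom S` forces `η ⊥ ran (S + z) = E`.
  have hdense : Dense (S.domain : Set E) := by
    rw [Submodule.dense_iff_topologicalClosure_eq_top, Submodule.topologicalClosure_eq_top_iff,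
      Submodule.eq_bot_iff]
    intro u hu
    obtain ⟨η, rfl⟩ := hz' u
    have hη : η = 0 := Subtype.ext <| eq_zero_of_inner_apply_add_smul hz fun x => by
      rw [← hS.inner_apply_add_conj_smul]
      exact Submodule.inner_left_of_mem_orthogonal x.2 hu
    simp [hη]
  have hle : S ≤ S† := hS.le_adjoint hdense
  have hdomain : S†.domain ≤ S.domain := by
    intro φ hφ
    obtain ⟨η, hη⟩ := hz' (S† ⟨φ, hφ⟩ + conj z • φ)
    have hφη : φ - η = 0 := eq_zero_of_inner_apply_add_smul hz fun x => by
      rw [inner_sub_left, ← hS.inner_apply_add_conj_smul, hη, inner_add_left, inner_smul_left,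
        adjoint_isFormalAdjoint hdense ⟨φ, hφ⟩ x, RCLike.conj_conj, inner_add_right,
        inner_smul_right]
      ring
    rw [sub_eq_zero.mp hφη]
    exact η.2
  exact (eq_of_le_of_domain_eq hle (le_antisymm hle.1 hdomain)).symm

theorem _root_.IsSelfAdjoint.isFormalAdjoint_s12 {T : E →ₗ.[𝕜] E} (hT : IsSelfAdjoint T) :
    T.IsFormalAdjoint T := by
  have h := adjoint_isFormalAdjoint hT.dense_domain (T := T)
  rwa [isSelfAdjoint_def.mp hT] at h

theorem _root_.IsSelfAdjoint.exists_apply_eq_of_inner {T : E →ₗ.[𝕜] E} (hT : IsSelfAdjoint T)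
    {y w : E} (h : ∀ x : T.domain, ⟪w, (x : E)⟫_𝕜 = ⟪y, T x⟫_𝕜) :
    ∃ hy : y ∈ T.domain, T ⟨y, hy⟩ = w := by
  have hy : y ∈ T†.domain := mem_adjoint_domain_of_exists y ⟨w, h⟩
  have key : ∀ A : E →ₗ.[𝕜] E, T† = A → ∃ hy : y ∈ A.domain, A ⟨y, hy⟩ = w := by
    rintro _ rfl
    exact ⟨hy, adjoint_apply_eq hT.dense_domain ⟨y, hy⟩ h⟩
  exact key T hT

theorem _root_.IsSelfAdjoint.exists_apply_add_conj_smul_adjoint_eq {T : E →ₗ.[𝕜] E}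
    (hT : IsSelfAdjoint T) {B : E →L[𝕜] E} (hB : IsSelfAdjoint B) {z : 𝕜} {R : E →L[𝕜] E}
    (hR : ∀ φ : E, ∀ hφ : φ ∈ T.domain, R (T ⟨φ, hφ⟩ + z • B φ) = φ) (ψ : E) :
    ∃ h : star R ψ ∈ T.domain, T ⟨star R ψ, h⟩ + conj z • B (star R ψ) = ψ := by
  have hinner (x : T.domain) :
      ⟪ψ - conj z • B (star R ψ), (x : E)⟫_𝕜 = ⟪star R ψ, T x⟫_𝕜 := by
    have hRx : ⟪star R ψ, T x + z • B x⟫_𝕜 = ⟪ψ, (x : E)⟫_𝕜 := by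
      rw [ContinuousLinearMap.star_eq_adjoint, ContinuousLinearMap.adjoint_inner_left, hR x x.2]
    have hBR : ⟪B (star R ψ), (x : E)⟫_𝕜 = ⟪star R ψ, B x⟫_𝕜 := hB.isSymmetric _ x
    rw [inner_add_right, inner_smul_right, ← hBR] at hRx
    rw [inner_sub_left, inner_smul_left, RCLike.conj_conj, ← hRx, add_sub_cancel_right]
  obtain ⟨hmem, happly⟩ := hT.exists_apply_eq_of_inner hinner
  exact ⟨hmem, by rw [happly, sub_add_cancel]⟩

end LinearPMap

section Sandwich

variable {E : Type*} [NormedAddCommGroup E] [InnerProductSpace ℂ E]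
variable (H₀ : E →ₗ.[ℂ] E) {sq sqinv : E →L[ℂ] E}

theorem isFormalAdjoint_sandwich [CompleteSpace E] (hH₀ : H₀.IsFormalAdjoint H₀)
    (hsq : IsSelfAdjoint sq) :
    (sandwich H₀ sq).IsFormalAdjoint (sandwich H₀ sq) := fun x y =>
  calc ⟪sq (H₀ ⟨sq x, x.2⟩), (y : E)⟫_ℂ = ⟪(H₀ ⟨sq x, x.2⟩ : E), sq y⟫_ℂ := hsq.isSymmetric _ _
    _ = ⟪sq (x : E), H₀ ⟨sq y, y.2⟩⟫_ℂ := hH₀ ⟨sq x, x.2⟩ ⟨sq y, y.2⟩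
    _ = ⟪(x : E), sq (H₀ ⟨sq y, y.2⟩)⟫_ℂ := hsq.isSymmetric _ _

theorem exists_sandwich_apply_add_smul_eq (hsq : sq ∘L sqinv = 1) {w : ℂ} {R : E →L[ℂ] E}
    (hR : ∀ ψ : E, ∃ hm : R ψ ∈ H₀.domain, H₀ ⟨R ψ, hm⟩ + w • (sqinv ∘L sqinv) (R ψ) = ψ)
    (φ : E) :
    ∃ hm : sqinv (R (sqinv φ)) ∈ (sandwich H₀ sq).domain,
      sandwich H₀ sq ⟨sqinv (R (sqinv φ)), hm⟩ + w • sqinv (R (sqinv φ)) = φ := by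
  have hsq_sqinv (v : E) : sq (sqinv v) = v := DFunLike.congr_fun hsq v
  obtain ⟨hm, hv⟩ := hR (sqinv φ)
  have hmem : sq (sqinv (R (sqinv φ))) ∈ H₀.domain := by rwa [hsq_sqinv]
  refine ⟨hmem, ?_⟩
  have hsub : (⟨sq (sqinv (R (sqinv φ))), hmem⟩ : H₀.domain) = ⟨R (sqinv φ), hm⟩ :=
    Subtype.ext (hsq_sqinv _)
  have h := congrArg sq hv
  rw [map_add, map_smul, ContinuousLinearMap.comp_apply, hsq_sqinv, hsq_sqinv] at h
  change sq (H₀ _) + _ = _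
  rwa [hsub]

theorem sandwich_resolvent_apply_add_smul (hsq : sqinv ∘L sq = 1) {w : ℂ} {R : E →L[ℂ] E}
    (hR : ∀ ψ : E, ∀ hψ : ψ ∈ H₀.domain, R (H₀ ⟨ψ, hψ⟩ + w • (sqinv ∘L sqinv) ψ) = ψ)
    (φ : E) (hφ : φ ∈ (sandwich H₀ sq).domain) :
    sqinv (R (sqinv (sandwich H₀ sq ⟨φ, hφ⟩ + w • φ))) = φ := by
  have hsqinv_sq (v : E) : sqinv (sq v) = v := DFunLike.congr_fun hsq v
  have h := hR (sq φ) hφ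
  rw [ContinuousLinearMap.comp_apply, hsqinv_sq] at h
  change sqinv (R (sqinv (sq (H₀ _) + w • φ))) = _
  rw [map_add, map_smul, hsqinv_sq, h, hsqinv_sq]

end Sandwich

theorem sandwich_selfAdjoint_and_resolvent_general
    (H₀ : H →ₗ.[ℂ] H) (hH₀ : IsSelfAdjoint H₀)
    (f finv sq sqinv : H →L[ℂ] H)
    (hsqsa : IsSelfAdjoint sq)
    (hsqf : sq ∘L sq = f)
    (hfinv₂ : finv ∘L f = 1)
    (hsqinv₁ : sq ∘L sqinv = 1) (hsqinv₂ : sqinv ∘L sq = 1)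
    (z : ℂ)
    -- `R₀` is the bounded inverse of `H₀ + z f⁻¹`
    (R₀ : H →L[ℂ] H)
    (hR₀ : ∀ φ : H, ∃ hm : R₀ φ ∈ H₀.domain, H₀ ⟨R₀ φ, hm⟩ + z • finv (R₀ φ) = φ)
    (hR₀' : ∀ φ : H, ∀ hφ : φ ∈ H₀.domain, R₀ (H₀ ⟨φ, hφ⟩ + z • finv φ) = φ) :
    IsSelfAdjoint (sandwich H₀ sq) ∧
    (∀ φ : H, ∃ hm : sqinv (R₀ (sqinv φ)) ∈ (sandwich H₀ sq).domain,
      (sandwich H₀ sq) ⟨sqinv (R₀ (sqinv φ)), hm⟩ + z • sqinv (R₀ (sqinv φ)) = φ) ∧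
    (∀ φ : H, ∀ hφ : φ ∈ (sandwich H₀ sq).domain,
      sqinv (R₀ (sqinv ((sandwich H₀ sq) ⟨φ, hφ⟩ + z • φ))) = φ) := by
  have hsq_sqinv : sq * sqinv = 1 := hsqinv₁
  have hfinv : finv = sqinv ∘L sqinv := left_inv_eq_right_inv (a := f) hfinv₂ <| by
    rw [← hsqf]
    change sq * sq * (sqinv * sqinv) = 1
    rw [mul_assoc, ← mul_assoc sq sqinv, hsq_sqinv, one_mul, hsq_sqinv]
  subst hfinv
  let _ : Invertible sq := ⟨sqinv, hsqinv₂, hsqinv₁⟩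
  have hweight : IsSelfAdjoint (sqinv ∘L sqinv) := by
    have hsqinv : IsSelfAdjoint sqinv := (IsSelfAdjoint.invOf_iff sq).mpr hsqsa
    have h := IsSelfAdjoint.star_mul_self sqinv
    rw [hsqinv.star_eq] at h
    exact h
  have hsurj {w : ℂ} {R : H →L[ℂ] H}
      (hR : ∀ ψ : H, ∃ hm : R ψ ∈ H₀.domain, H₀ ⟨R ψ, hm⟩ + w • (sqinv ∘L sqinv) (R ψ) = ψ)
      (ψ : H) : ∃ x : (sandwich H₀ sq).domain, sandwich H₀ sq x + w • (x : H) = ψ :=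
    let ⟨hm, h⟩ := exists_sandwich_apply_add_smul_eq H₀ hsqinv₁ hR ψ
    ⟨⟨_, hm⟩, h⟩
  refine ⟨?_, exists_sandwich_apply_add_smul_eq H₀ hsqinv₁ hR₀,
    sandwich_resolvent_apply_add_smul H₀ hsqinv₂ hR₀'⟩
  exact LinearPMap.isSelfAdjoint_of_surjective_add_smul
    (isFormalAdjoint_sandwich H₀ hH₀.isFormalAdjoint_s12 hsqsa) z (hsurj hR₀)
    (hsurj (hH₀.exists_apply_add_conj_smul_adjoint_eq hweight hR₀'))

/-- If `H₀` is self-adjoint and `f` is a bounded positive invertible operator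
(`δ ≤ f ≤ C`) with positive square root `f^{1/2}`, then `H := f^{1/2} H₀ f^{1/2}` is
self-adjoint, and for `z ∈ ℂ \ ℝ` the resolvent identity
`(H + z)⁻¹ = f^{-1/2} (H₀ + z f⁻¹)⁻¹ f^{-1/2}` holds. -/
theorem sandwich_selfAdjoint_and_resolvent
    (H₀ : H →ₗ.[ℂ] H) (hH₀ : IsSelfAdjoint H₀)
    (f finv sq sqinv : H →L[ℂ] H)
    (hfsa : IsSelfAdjoint f) (hsqsa : IsSelfAdjoint sq)
    (hsq_pos : ∀ φ : H, 0 ≤ (inner (𝕜 := ℂ) φ (sq φ)).re)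
    (hsqf : sq ∘L sq = f)
    (hfinv₁ : f ∘L finv = 1) (hfinv₂ : finv ∘L f = 1)
    (hsqinv₁ : sq ∘L sqinv = 1) (hsqinv₂ : sqinv ∘L sq = 1)
    (δ C : ℝ) (hδ : 0 < δ) (hδC : δ ≤ C)
    (hlow : ∀ φ : H, δ * ‖φ‖ ^ 2 ≤ (inner (𝕜 := ℂ) φ (f φ)).re)
    (hupp : ∀ φ : H, (inner (𝕜 := ℂ) φ (f φ)).re ≤ C * ‖φ‖ ^ 2)
    (z : ℂ) (hz : z.im ≠ 0)
    -- `R₀` is the bounded inverse of `H₀ + z f⁻¹`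
    (R₀ : H →L[ℂ] H)
    (hR₀ : ∀ φ : H, ∃ hm : R₀ φ ∈ H₀.domain, H₀ ⟨R₀ φ, hm⟩ + z • finv (R₀ φ) = φ)
    (hR₀' : ∀ φ : H, ∀ hφ : φ ∈ H₀.domain, R₀ (H₀ ⟨φ, hφ⟩ + z • finv φ) = φ) :
    IsSelfAdjoint (sandwich H₀ sq) ∧
    (∀ φ : H, ∃ hm : sqinv (R₀ (sqinv φ)) ∈ (sandwich H₀ sq).domain,
      (sandwich H₀ sq) ⟨sqinv (R₀ (sqinv φ)), hm⟩ + z • sqinv (R₀ (sqinv φ)) = φ) ∧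
    (∀ φ : H, ∀ hφ : φ ∈ (sandwich H₀ sq).domain,
      sqinv (R₀ (sqinv ((sandwich H₀ sq) ⟨φ, hφ⟩ + z • φ))) = φ) :=
  sandwich_selfAdjoint_and_resolvent_general H₀ hH₀ f finv sq sqinv hsqsa hsqf hfinv₂ hsqinv₁
    hsqinv₂ z R₀ hR₀ hR₀'
end

section
/- Let S be a bounded operator and A a self-adjoint operator on a Hilbert space H. If the map t ↦ e^{-itA} S e^{itA} is strongly differentiable at t = 0 with strong derivative D ∈ B(H), then for all φ, ψ ∈ dom(A): ⟨Aφ, Sψ⟩ − ⟨φ, S Aψ⟩ = ⟨φ, iDψ⟩; i.e., the commutator form [A, S] on dom(A) is given by the bounded operator iD. -/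
open scoped InnerProductSpace

/-!
Pair the conjugated family with `φ`. Since `e^{-itA}` is the adjoint of `e^{itA}`,
`⟪φ, e^{-itA} S e^{itA} ψ⟫ = ⟪e^{itA} φ, S e^{itA} ψ⟫`. Differentiating the left side at `0`
gives `⟪φ, D ψ⟫`, the product rule on the right gives `⟪i A φ, S ψ⟫ + ⟪φ, S (i A ψ)⟫`, and
the theorem is this identity multiplied by `i`.
-/

section OneParameterGroup

variable {𝕜 E : Type*} [RCLike 𝕜] [NormedAddCommGroup E] [InnerProductSpace 𝕜 E]
  {W : ℝ → E ≃ₗᵢ[𝕜] E}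

/- In the group `E ≃ₗᵢ[𝕜] E`, `e * e' = e'.trans e`, so `hW` makes `W` a homomorphism. -/
theorem zero_eq_one_of_add_eq_trans (hW : ∀ s t : ℝ, W (s + t) = (W s).trans (W t)) :
    W 0 = 1 := by
  have h : W 0 * W 0 = W 0 := by rw [LinearIsometryEquiv.mul_def, ← hW, add_zero]
  exact mul_eq_left.mp h

theorem neg_eq_symm_of_add_eq_trans (hW : ∀ s t : ℝ, W (s + t) = (W s).trans (W t)) (t : ℝ) :
    W (-t) = (W t).symm := by
  rw [← LinearIsometryEquiv.inv_def]
  refine eq_inv_of_mul_eq_one_left ?_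
  rw [← zero_eq_one_of_add_eq_trans hW, LinearIsometryEquiv.mul_def, ← hW, add_neg_cancel]

theorem inner_neg_apply_of_add_eq_trans (hW : ∀ s t : ℝ, W (s + t) = (W s).trans (W t))
    (t : ℝ) (x y : E) : ⟪x, W (-t) y⟫_𝕜 = ⟪W t x, y⟫_𝕜 := by
  rw [neg_eq_symm_of_add_eq_trans hW, ← (W t).inner_map_map, LinearIsometryEquiv.apply_symm_apply]

variable [NormedSpace ℝ E] [IsScalarTower ℝ 𝕜 E]

theorem inner_eq_of_hasDerivAt_conj_of_add_eq_trans
    (hW : ∀ s t : ℝ, W (s + t) = (W s).trans (W t)) (S : E →L[𝕜] E) {φ ψ a b d : E}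
    (ha : HasDerivAt (fun t : ℝ => W t φ) a 0) (hb : HasDerivAt (fun t : ℝ => W t ψ) b 0)
    (hd : HasDerivAt (fun t : ℝ => W (-t) (S (W t ψ))) d 0) :
    ⟪φ, d⟫_𝕜 = ⟪a, S ψ⟫_𝕜 + ⟪φ, S b⟫_𝕜 := by
  have hleft : HasDerivAt (fun t : ℝ => ⟪φ, W (-t) (S (W t ψ))⟫_𝕜) ⟪φ, d⟫_𝕜 0 := by
    simpa using (hasDerivAt_const (0 : ℝ) φ).inner 𝕜 hd
  have hright : HasDerivAt (fun t : ℝ => ⟪W t φ, S (W t ψ)⟫_𝕜) (⟪φ, S b⟫_𝕜 + ⟪a, S ψ⟫_𝕜) 0 := by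
    have hSb := (S.restrictScalars ℝ).hasFDerivAt.comp_hasDerivAt 0 hb
    simpa [zero_eq_one_of_add_eq_trans hW] using ha.inner 𝕜 hSb
  simp only [inner_neg_apply_of_add_eq_trans hW] at hleft
  rw [hleft.unique hright, add_comm]

end OneParameterGroup

theorem commutator_form_of_strong_deriv_general
    {H : Type*} [NormedAddCommGroup H] [InnerProductSpace ℂ H]
    (A : H →ₗ.[ℂ] H)
    (W : ℝ → H ≃ₗᵢ[ℂ] H)
    (hgrp : ∀ s t : ℝ, W (s + t) = (W s).trans (W t))
    (hgen : ∀ φ : H, ∀ hφ : φ ∈ A.domain,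
      HasDerivAt (fun t : ℝ => (W t) φ) (Complex.I • A ⟨φ, hφ⟩) 0)
    (S D : H →L[ℂ] H)
    (hD : ∀ φ : H, HasDerivAt (fun t : ℝ => (W (-t)) (S ((W t) φ))) (D φ) 0) :
    ∀ φ ψ : H, ∀ hφ : φ ∈ A.domain, ∀ hψ : ψ ∈ A.domain,
      ⟪A ⟨φ, hφ⟩, S ψ⟫_ℂ - ⟪φ, S (A ⟨ψ, hψ⟩)⟫_ℂ = ⟪φ, Complex.I • D ψ⟫_ℂ := by
  intro φ ψ hφ hψ
  have key := inner_eq_of_hasDerivAt_conj_of_add_eq_trans hgrp S (hgen φ hφ) (hgen ψ hψ) (hD ψ)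
  rw [map_smul, inner_smul_left, inner_smul_right, Complex.conj_I] at key
  rw [inner_smul_right, key]
  linear_combination (⟪A ⟨φ, hφ⟩, S ψ⟫_ℂ - ⟪φ, S (A ⟨ψ, hψ⟩)⟫_ℂ) * Complex.I_sq

/-- If `S` is bounded, `A` is self-adjoint generating the unitary group `e^{itA}`, and
`t ↦ e^{-itA} S e^{itA}` is strongly differentiable at `0` with derivative `D`, then
for all `φ, ψ ∈ dom A`: `⟨Aφ, Sψ⟩ − ⟨φ, S Aψ⟩ = ⟨φ, iDψ⟩`, i.e. the commutator form
`[A, S]` on `dom A` is given by the bounded operator `iD`. -/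
theorem commutator_form_of_strong_deriv
    {H : Type*} [NormedAddCommGroup H] [InnerProductSpace ℂ H] [CompleteSpace H]
    (A : H →ₗ.[ℂ] H) (hA : IsSelfAdjoint A)
    (W : ℝ → H ≃ₗᵢ[ℂ] H)
    (hgrp : ∀ s t : ℝ, W (s + t) = (W s).trans (W t))
    (hgen : ∀ φ : H, ∀ hφ : φ ∈ A.domain,
      HasDerivAt (fun t : ℝ => (W t) φ) (Complex.I • A ⟨φ, hφ⟩) 0)
    (S D : H →L[ℂ] H)
    (hD : ∀ φ : H, HasDerivAt (fun t : ℝ => (W (-t)) (S ((W t) φ))) (D φ) 0) :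
    ∀ φ ψ : H, ∀ hφ : φ ∈ A.domain, ∀ hψ : ψ ∈ A.domain,
      ⟪A ⟨φ, hφ⟩, S ψ⟫_ℂ - ⟪φ, S (A ⟨ψ, hψ⟩)⟫_ℂ = ⟪φ, Complex.I • D ψ⟫_ℂ :=
  commutator_form_of_strong_deriv_general A W hgrp hgen S D hD
end

section
/- Let g be a bounded self-adjoint operator with g ≥ δ > 0 on a Hilbert space, H a self-adjoint operator, and suppose g ∈ C¹(H) with bounded commutator [g, H] = B. Then g^{1/2} ∈ C¹(H), and the bounded commutator [g^{1/2}, H] satisfies g^{1/2}[g^{1/2}, H] + [g^{1/2}, H]g^{1/2} = [g, H]. -/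
/-!
Normalise `g = M (1 + x)` with `M = ‖g‖ + δ`, so that `δ ≤ g` gives `‖x‖ < 1`. Then
`g^{1/2} = √M ∑ choose(1/2, n) xⁿ`; the commutator of `xⁿ` with `H` is given by the Leibniz
rule and grows only like `n ‖x‖ⁿ⁻¹`, so the commutators of the partial sums converge to a bounded
`K`. That the series really is the positive square root follows from uniqueness of positive square
roots, positivity coming from it being the square of the self-adjoint series with exponent `1/4`.
Finally `g = g^{1/2} g^{1/2}` and the Leibniz rule give `[g, H] = g^{1/2} K + K g^{1/2}`, and the
bounded operator representing a commutator form on the dense domain of `H` is unique.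
-/

open scoped InnerProductSpace
open Finset

namespace Ring

lemma succ_mul_choose_succ (a : ℝ) (n : ℕ) :
    ((n : ℝ) + 1) * choose a (n + 1) = choose a n * (a - n) := by
  have h := choose_smul_choose a (Nat.le_succ n)
  rw [Nat.choose_succ_self_right, Nat.succ_eq_add_one, Nat.add_sub_cancel_left,
    choose_one_right, nsmul_eq_mul] at h
  exact_mod_cast h

lemma abs_choose_le_one {a : ℝ} (ha : |a| ≤ 1) (n : ℕ) : |choose a n| ≤ 1 := by
  induction n with
  | zero => simp
  | succ n ih =>
    have hn : (0 : ℝ) < n + 1 := by positivity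
    have hsub : |a - n| ≤ n + 1 := by
      rw [abs_le] at ha ⊢
      constructor <;> linarith [(n.cast_nonneg : (0 : ℝ) ≤ n)]
    refine le_of_mul_le_mul_left ?_ hn
    calc ((n : ℝ) + 1) * |choose a (n + 1)| = |choose a n| * |a - n| := by
          rw [← abs_mul, ← succ_mul_choose_succ, abs_mul, abs_of_pos hn]
      _ ≤ 1 * (n + 1) := mul_le_mul ih hsub (abs_nonneg _) zero_le_one
      _ = (n + 1) * 1 := by ring

end Ring

/-- The image of `x ^ n` under any derivation sending `x` to `y`. -/
def derivPow {R : Type*} [Ring R] (x y : R) : ℕ → R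
  | 0 => 0
  | n + 1 => x * derivPow x y n + y * x ^ n

lemma norm_derivPow_succ_le {R : Type*} [NormedRing R] (x y : R) (n : ℕ) :
    ‖derivPow x y (n + 1)‖ ≤ (n + 1) * ‖x‖ ^ n * ‖y‖ := by
  induction n with
  | zero => simp [derivPow]
  | succ n ih =>
    calc ‖derivPow x y (n + 1 + 1)‖
        = ‖x * derivPow x y (n + 1) + y * x ^ (n + 1)‖ := rfl
      _ ≤ ‖x‖ * ‖derivPow x y (n + 1)‖ + ‖y‖ * ‖x ^ (n + 1)‖ :=
          (norm_add_le _ _).trans (add_le_add (norm_mul_le _ _) (norm_mul_le _ _))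
      _ ≤ ‖x‖ * ((n + 1) * ‖x‖ ^ n * ‖y‖) + ‖y‖ * ‖x‖ ^ (n + 1) := by
          gcongr
          exact norm_pow_le' x n.succ_pos
      _ = ((n + 1 : ℕ) + 1) * ‖x‖ ^ (n + 1) * ‖y‖ := by push_cast; ring

section BinomialSeries

variable {A : Type*} [NormedRing A] [NormedAlgebra ℝ A]

noncomputable def binomSeries (a : ℝ) (x : A) : A := ∑' n, Ring.choose a n • x ^ n

lemma summable_norm_choose_smul_pow {a : ℝ} (ha : |a| ≤ 1) {x : A} (hx : ‖x‖ < 1) :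
    Summable fun n ↦ ‖Ring.choose a n • x ^ n‖ := by
  refine (summable_norm_geometric_of_norm_lt_one hx).of_nonneg_of_le
    (fun _ ↦ norm_nonneg _) fun n ↦ ?_
  rw [norm_smul, Real.norm_eq_abs]
  exact mul_le_of_le_one_left (norm_nonneg _) (Ring.abs_choose_le_one ha n)

lemma summable_norm_choose_smul_derivPow {a : ℝ} (ha : |a| ≤ 1) {x : A} (hx : ‖x‖ < 1)
    (y : A) : Summable fun n ↦ ‖Ring.choose a n • derivPow x y n‖ := by
  have hbound : Summable fun n : ℕ ↦ ((n : ℝ) + 1) * ‖x‖ ^ n * ‖y‖ := by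
    have h := summable_pow_mul_geometric_of_norm_lt_one (R := ℝ) 1 (r := ‖x‖)
      (by rwa [norm_norm])
    simpa [add_mul] using
      (h.add (summable_geometric_of_lt_one (norm_nonneg x) hx)).mul_right ‖y‖
  rw [← summable_nat_add_iff 1]
  refine hbound.of_nonneg_of_le (fun _ ↦ norm_nonneg _) fun n ↦ ?_
  rw [norm_smul, Real.norm_eq_abs]
  exact mul_le_of_le_one_left (norm_nonneg _) (Ring.abs_choose_le_one ha _)
    |>.trans (norm_derivPow_succ_le x y n)

lemma binomSeries_mul_binomSeries [CompleteSpace A] {a b : ℝ} (ha : |a| ≤ 1) (hb : |b| ≤ 1)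
    {x : A} (hx : ‖x‖ < 1) : binomSeries a x * binomSeries b x = binomSeries (a + b) x := by
  rw [binomSeries, binomSeries, tsum_mul_tsum_eq_tsum_sum_antidiagonal_of_summable_norm
    (summable_norm_choose_smul_pow ha hx) (summable_norm_choose_smul_pow hb hx)]
  refine tsum_congr fun n ↦ ?_
  rw [Ring.add_choose_eq n (Commute.all a b), sum_smul]
  refine sum_congr rfl fun kl hkl ↦ ?_
  rw [smul_mul_smul_comm, ← pow_add, mem_antidiagonal.mp hkl]

lemma binomSeries_one (x : A) : binomSeries 1 x = 1 + x := by
  have hchoose (n : ℕ) : Ring.choose (1 : ℝ) n = Nat.choose 1 n := by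
    exact_mod_cast Ring.choose_natCast (R := ℝ) 1 n
  rw [binomSeries, tsum_eq_sum (s := range 2)]
  · simp [sum_range_succ, hchoose]
  · intro n hn
    simp only [mem_range, not_lt] at hn
    simp [hchoose, Nat.choose_eq_zero_of_lt (by omega : 1 < n)]

lemma IsSelfAdjoint.binomSeries [StarRing A] [StarModule ℝ A] [ContinuousStar A] {x : A}
    (hx : IsSelfAdjoint x) (a : ℝ) : IsSelfAdjoint (binomSeries a x) := by
  rw [IsSelfAdjoint, _root_.binomSeries, tsum_star]
  exact tsum_congr fun n ↦ ((IsSelfAdjoint.all _).smul (hx.pow n)).star_eq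

end BinomialSeries

section CStarAlgebra

variable {A : Type*} [CStarAlgebra A] [PartialOrder A] [StarOrderedRing A]

lemma CStarAlgebra.norm_inv_smul_sub_one_lt_one {a : A} {δ : ℝ} (hδ : 0 < δ)
    (ha : algebraMap ℝ A δ ≤ a) : ‖(‖a‖ + δ)⁻¹ • a - 1‖ < 1 := by
  set M := ‖a‖ + δ
  have hM : 0 < M := by positivity
  have ha_sa : IsSelfAdjoint a := .of_nonneg ((algebraMap_nonneg A hδ.le).trans ha)
  have hupper : M⁻¹ • a ≤ algebraMap ℝ A 1 := by
    calc M⁻¹ • a ≤ M⁻¹ • algebraMap ℝ A ‖a‖ :=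
          smul_le_smul_of_nonneg_left ha_sa.le_algebraMap_norm_self (by positivity)
      _ = algebraMap ℝ A (M⁻¹ * ‖a‖) := by rw [map_mul, Algebra.smul_def]
      _ ≤ algebraMap ℝ A 1 := algebraMap_mono A <| by
          rw [inv_mul_le_one₀ hM]; linarith [norm_nonneg a]
  have hlower : algebraMap ℝ A (M⁻¹ * δ) ≤ M⁻¹ • a := by
    rw [map_mul, ← Algebra.smul_def]
    exact smul_le_smul_of_nonneg_left ha (by positivity)
  have hnorm : ‖1 - M⁻¹ • a‖ ≤ 1 - M⁻¹ * δ := by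
    have hMδ : M⁻¹ * δ ≤ 1 := by rw [inv_mul_le_one₀ hM]; linarith [norm_nonneg a]
    rw [CStarAlgebra.norm_le_iff_le_algebraMap _ (by linarith)
      (by rwa [sub_nonneg, ← map_one (algebraMap ℝ A)]), map_sub, map_one]
    exact sub_le_sub_left hlower 1
  calc ‖M⁻¹ • a - 1‖ = ‖1 - M⁻¹ • a‖ := norm_sub_rev _ _
    _ ≤ 1 - M⁻¹ * δ := hnorm
    _ < 1 := sub_lt_self 1 (by positivity)

lemma CFC.sqrt_eq_smul_binomSeries {a : A} {δ : ℝ} (hδ : 0 < δ) (ha : algebraMap ℝ A δ ≤ a) :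
    CFC.sqrt a = √(‖a‖ + δ) • binomSeries (1 / 2) ((‖a‖ + δ)⁻¹ • a - 1) := by
  set M := ‖a‖ + δ
  set x := M⁻¹ • a - 1
  have hM : 0 < M := by positivity
  have hx : ‖x‖ < 1 := CStarAlgebra.norm_inv_smul_sub_one_lt_one hδ ha
  have ha_sa : IsSelfAdjoint a := .of_nonneg ((algebraMap_nonneg A hδ.le).trans ha)
  have hx_sa : IsSelfAdjoint x := ((IsSelfAdjoint.all M⁻¹).smul ha_sa).sub (.one _)
  have h_quarter : |(1 / 4 : ℝ)| ≤ 1 := by norm_num [abs_of_pos]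
  have h_half : |(1 / 2 : ℝ)| ≤ 1 := by norm_num [abs_of_pos]
  have h_nonneg : 0 ≤ binomSeries (1 / 2) x := by
    have h := binomSeries_mul_binomSeries h_quarter h_quarter hx
    rw [show (1 / 4 : ℝ) + 1 / 4 = 1 / 2 by norm_num] at h
    exact h ▸ (hx_sa.binomSeries _).mul_self_nonneg
  refine CFC.sqrt_unique ?_ (smul_nonneg (Real.sqrt_nonneg M) h_nonneg)
  rw [smul_mul_smul_comm, binomSeries_mul_binomSeries h_half h_half hx, add_halves,
    binomSeries_one, add_sub_cancel, smul_smul, Real.mul_self_sqrt hM.le,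
    mul_inv_cancel₀ hM.ne', one_smul]

end CStarAlgebra

namespace IsSelfAdjoint

open LinearPMap

variable {𝕜 E : Type*} [RCLike 𝕜] [NormedAddCommGroup E] [InnerProductSpace 𝕜 E]
  [CompleteSpace E] {T : E →ₗ.[𝕜] E}

lemma inner_map_left (hT : IsSelfAdjoint T) (x y : T.domain) :
    ⟪T x, (y : E)⟫_𝕜 = ⟪(x : E), T y⟫_𝕜 := by
  have h := adjoint_isFormalAdjoint hT.dense_domain (T := T)
  rw [isSelfAdjoint_def.mp hT] at h
  exact h x y

lemma exists_mem_domain_of_inner_eq (hT : IsSelfAdjoint T) {ψ χ : E}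
    (h : ∀ φ : T.domain, ⟪T φ, ψ⟫_𝕜 = ⟪(φ : E), χ⟫_𝕜) :
    ∃ hψ : ψ ∈ T.domain, T ⟨ψ, hψ⟩ = χ := by
  have h' (φ : T.domain) : ⟪χ, (φ : E)⟫_𝕜 = ⟪ψ, T φ⟫_𝕜 := by
    rw [← inner_conj_symm, ← h, inner_conj_symm]
  rw [← isSelfAdjoint_def.mp hT]
  have hψ : ψ ∈ T†.domain := mem_adjoint_domain_of_exists ψ ⟨χ, h'⟩
  exact ⟨hψ, adjoint_apply_eq hT.dense_domain ⟨ψ, hψ⟩ h'⟩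

end IsSelfAdjoint

section Commutator

variable {H : Type*} [NormedAddCommGroup H] [InnerProductSpace ℂ H]

lemma ContinuousLinearMap.algebraMap_le_of_forall_le_re_inner [CompleteSpace H]
    {S : H →L[ℂ] H} (hS : IsSelfAdjoint S) {c : ℝ}
    (h : ∀ φ, c * ‖φ‖ ^ 2 ≤ (⟪φ, S φ⟫_ℂ).re) : algebraMap ℝ (H →L[ℂ] H) c ≤ S := by
  rw [ContinuousLinearMap.le_def, ContinuousLinearMap.isPositive_def]
  refine ⟨(hS.sub (.algebraMap _ (.all c))).isSymmetric, fun φ ↦ ?_⟩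
  rw [ContinuousLinearMap.reApplyInnerSelf_apply, sub_apply, inner_sub_left, map_sub,
    inner_re_symm, sub_nonneg]
  calc RCLike.re ⟪algebraMap ℝ (H →L[ℂ] H) c φ, φ⟫_ℂ = c * ‖φ‖ ^ 2 := by
        simp [Algebra.algebraMap_eq_smul_one, ← Complex.coe_smul, inner_self_eq_norm_sq_to_K,
          ← Complex.ofReal_pow, mul_comm]
    _ ≤ _ := h φ

/-- `C` is the commutator `[S, T] = S T - T S`, taken as a form on `dom T`. -/
def HasCommutator (T : H →ₗ.[ℂ] H) (S C : H →L[ℂ] H) : Prop :=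
  ∀ (φ ψ : H) (hφ : φ ∈ T.domain) (hψ : ψ ∈ T.domain),
    ⟪φ, S (T ⟨ψ, hψ⟩)⟫_ℂ - ⟪T ⟨φ, hφ⟩, S ψ⟫_ℂ = ⟪φ, C ψ⟫_ℂ

namespace HasCommutator

variable {T : H →ₗ.[ℂ] H}

lemma smul {S C : H →L[ℂ] H} (h : HasCommutator T S C) (c : ℝ) :
    HasCommutator T (c • S) (c • C) := fun φ ψ hφ hψ ↦ by
  simp only [← Complex.coe_smul, smul_apply, inner_smul_right, ← mul_sub, h φ ψ hφ hψ]

lemma sub {S₁ C₁ S₂ C₂ : H →L[ℂ] H} (h₁ : HasCommutator T S₁ C₁)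
    (h₂ : HasCommutator T S₂ C₂) : HasCommutator T (S₁ - S₂) (C₁ - C₂) := fun φ ψ hφ hψ ↦ by
  simp only [sub_apply, inner_sub_right, ← h₁ φ ψ hφ hψ, ← h₂ φ ψ hφ hψ]
  ring

lemma tsum {S C : ℕ → H →L[ℂ] H} (hS : Summable S) (hC : Summable C)
    (h : ∀ n, HasCommutator T (S n) (C n)) : HasCommutator T (∑' n, S n) (∑' n, C n) := by
  intro φ ψ hφ hψ
  let form : (H →L[ℂ] H) →L[ℂ] ℂ :=
    (innerSL ℂ φ).comp (ContinuousLinearMap.apply ℂ H (T ⟨ψ, hψ⟩))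
      - (innerSL ℂ (T ⟨φ, hφ⟩)).comp (ContinuousLinearMap.apply ℂ H ψ)
  let matrixCoeff : (H →L[ℂ] H) →L[ℂ] ℂ := (innerSL ℂ φ).comp (ContinuousLinearMap.apply ℂ H ψ)
  change form (∑' n, S n) = matrixCoeff (∑' n, C n)
  rw [form.map_tsum hS, matrixCoeff.map_tsum hC]
  exact tsum_congr fun n ↦ h n φ ψ hφ hψ

variable [CompleteSpace H]

lemma one (hT : IsSelfAdjoint T) : HasCommutator T 1 0 := fun φ ψ hφ hψ ↦ by
  simp [hT.inner_map_left ⟨φ, hφ⟩ ⟨ψ, hψ⟩]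

lemma exists_mem_domain (hT : IsSelfAdjoint T) {S C : H →L[ℂ] H} (h : HasCommutator T S C)
    {ψ : H} (hψ : ψ ∈ T.domain) :
    ∃ hSψ : S ψ ∈ T.domain, T ⟨S ψ, hSψ⟩ = S (T ⟨ψ, hψ⟩) - C ψ :=
  hT.exists_mem_domain_of_inner_eq fun φ ↦ by
    rw [inner_sub_right, ← h φ ψ φ.2 hψ]
    ring

lemma mul (hT : IsSelfAdjoint T) {S₁ C₁ S₂ C₂ : H →L[ℂ] H} (h₁ : HasCommutator T S₁ C₁)
    (h₂ : HasCommutator T S₂ C₂) : HasCommutator T (S₁ * S₂) (S₁ * C₂ + C₁ * S₂) := by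
  intro φ ψ hφ hψ
  obtain ⟨hS₂ψ, hT_S₂ψ⟩ := h₂.exists_mem_domain hT hψ
  have h := h₁ φ (S₂ ψ) hφ hS₂ψ
  rw [hT_S₂ψ, map_sub, inner_sub_right] at h
  simp only [mul_apply_eq_comp, add_apply, inner_add_right, ← h]
  ring

lemma pow (hT : IsSelfAdjoint T) {S C : H →L[ℂ] H} (h : HasCommutator T S C) (n : ℕ) :
    HasCommutator T (S ^ n) (derivPow S C n) := by
  induction n with
  | zero => exact one hT
  | succ n ih => rw [pow_succ']; exact h.mul hT ih

lemma binomSeries (hT : IsSelfAdjoint T) {x y : H →L[ℂ] H} (h : HasCommutator T x y) {a : ℝ}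
    (ha : |a| ≤ 1) (hx : ‖x‖ < 1) :
    HasCommutator T (_root_.binomSeries a x) (∑' n, Ring.choose a n • derivPow x y n) :=
  .tsum (summable_norm_choose_smul_pow ha hx).of_norm
    (summable_norm_choose_smul_derivPow ha hx y).of_norm fun n ↦ (h.pow hT n).smul _

lemma unique (hT : IsSelfAdjoint T) {S C₁ C₂ : H →L[ℂ] H} (h₁ : HasCommutator T S C₁)
    (h₂ : HasCommutator T S C₂) : C₁ = C₂ := by
  have hdense : Dense (T.domain : Set H) := hT.dense_domain
  refine ContinuousLinearMap.ext_on (hdense.mono Submodule.subset_span) fun ψ hψ ↦ ?_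
  exact hdense.eq_of_inner_right ℂ fun φ hφ ↦ by rw [← h₁ φ ψ hφ hψ, h₂ φ ψ hφ hψ]

end HasCommutator

end Commutator

/-- If `g ≥ δ > 0` is bounded self-adjoint with positive square root `g^{1/2}`,
`H` is self-adjoint, and `g ∈ C¹(H)` with bounded commutator `[g, H] = B`, then
`g^{1/2} ∈ C¹(H)`: the commutator form `[g^{1/2}, H]` on `dom H` extends to a bounded
operator `K` satisfying `g^{1/2} K + K g^{1/2} = B`. -/
theorem sqrt_regularity
    {H : Type*} [NormedAddCommGroup H] [InnerProductSpace ℂ H] [CompleteSpace H]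
    (Hop : H →ₗ.[ℂ] H) (hHop : IsSelfAdjoint Hop)
    (g sq B : H →L[ℂ] H) (hg : IsSelfAdjoint g) (hB : IsSelfAdjoint sq)
    (δ : ℝ) (hδ : 0 < δ) (hg_low : ∀ φ : H, δ * ‖φ‖ ^ 2 ≤ (⟪φ, g φ⟫_ℂ).re)
    -- `sq` is the positive square root `g^{1/2}`
    (hsq_pos : ∀ φ : H, 0 ≤ (⟪φ, sq φ⟫_ℂ).re) (hsq : sq ∘L sq = g)
    -- `g ∈ C¹(H)` with commutator `[g, H] = B`:
    (hgB : ∀ φ ψ : H, ∀ hφ : φ ∈ Hop.domain, ∀ hψ : ψ ∈ Hop.domain,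
      ⟪φ, g (Hop ⟨ψ, hψ⟩)⟫_ℂ - ⟪Hop ⟨φ, hφ⟩, g ψ⟫_ℂ = ⟪φ, B ψ⟫_ℂ) :
    ∃ K : H →L[ℂ] H,
      (∀ φ ψ : H, ∀ hφ : φ ∈ Hop.domain, ∀ hψ : ψ ∈ Hop.domain,
        ⟪φ, sq (Hop ⟨ψ, hψ⟩)⟫_ℂ - ⟪Hop ⟨φ, hφ⟩, sq ψ⟫_ℂ = ⟪φ, K ψ⟫_ℂ) ∧
      sq ∘L K + K ∘L sq = B := by
  have hg_ge : algebraMap ℝ _ δ ≤ g :=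
    ContinuousLinearMap.algebraMap_le_of_forall_le_re_inner hg hg_low
  have hsq_nonneg : 0 ≤ sq := by
    simpa using ContinuousLinearMap.algebraMap_le_of_forall_le_re_inner hB (c := 0)
      (by simpa using hsq_pos)
  set M := ‖g‖ + δ
  set x := M⁻¹ • g - 1
  have hx_comm : HasCommutator Hop x (M⁻¹ • B) := by
    simpa using (HasCommutator.smul hgB M⁻¹).sub (.one hHop)
  have hsq_comm := (hx_comm.binomSeries hHop (a := 1 / 2) (by norm_num [abs_of_pos])
    (CStarAlgebra.norm_inv_smul_sub_one_lt_one hδ hg_ge)).smul √M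
  rw [← CFC.sqrt_eq_smul_binomSeries hδ hg_ge, CFC.sqrt_unique hsq hsq_nonneg] at hsq_comm
  refine ⟨_, hsq_comm, ?_⟩
  have hg_comm := hsq_comm.mul hHop hsq_comm
  rw [show sq * sq = g from hsq] at hg_comm
  exact hg_comm.unique hHop hgB
end
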